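/- Let B be an N×N symmetric positive-definite banded matrix with bandwidth k (i.e. B_{ij} = 0 whenever |i-j| > k), with minimal and maximal eigenvalues λ_min, λ_max. Set λ_μ = √λ_min, λ_m = √λ_max, q = ((λ_m+λ_μ)/(λ_m-λ_μ))^{1/k}, and C_B = (1/λ_μ²)·max(1, (λ_μ+λ_m)²/(2λ_m²)). Then |(B^{-1})_{ij}| ≤ C_B · q^{-|i-j|} for all i, j. -/

import Mathlib

open Matrix Polynomial

lemma cheb_eval_add_inv (σ : ℝ) (hσ : σ ≠ 0) (j : ℤ) :
    (Polynomial.Chebyshev.T ℝ j).eval ((σ + σ⁻¹)/2) = (σ ^ j + σ⁻¹ ^ j)/2 := by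
  have hσ' : σ⁻¹ ≠ 0 := inv_ne_zero hσ
  have hs : σ * σ⁻¹ = 1 := mul_inv_cancel₀ hσ
  induction j using Polynomial.Chebyshev.induct with
  | zero => simp
  | one => simp [Polynomial.Chebyshev.T_one]
  | add_two n h1 h2 =>
      rw [Polynomial.Chebyshev.T_add_two]
      simp only [eval_sub, eval_mul, eval_ofNat, eval_X, h1, h2]
      have e1 : σ ^ ((n : ℤ) + 2) = σ ^ (n : ℤ) * σ * σ := by
        rw [show (n : ℤ) + 2 = ((n : ℤ) + 1) + 1 by ring, zpow_add_one₀ hσ, zpow_add_one₀ hσ]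
      have e2 : σ⁻¹ ^ ((n : ℤ) + 2) = σ⁻¹ ^ (n : ℤ) * σ⁻¹ * σ⁻¹ := by
        rw [show (n : ℤ) + 2 = ((n : ℤ) + 1) + 1 by ring, zpow_add_one₀ hσ', zpow_add_one₀ hσ']
      have e3 : σ ^ ((n : ℤ) + 1) = σ ^ (n : ℤ) * σ := by rw [zpow_add_one₀ hσ]
      have e4 : σ⁻¹ ^ ((n : ℤ) + 1) = σ⁻¹ ^ (n : ℤ) * σ⁻¹ := by rw [zpow_add_one₀ hσ']
      rw [e1, e2, e3, e4]
      linear_combination ((σ ^ (n : ℤ) + σ⁻¹ ^ (n : ℤ))/2) * hs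
  | neg_add_one n h1 h2 =>
      rw [Polynomial.Chebyshev.T_sub_one]
      simp only [eval_sub, eval_mul, eval_ofNat, eval_X, h1, h2]
      have e1 : σ ^ (-(n : ℤ) - 1) = σ ^ (-(n : ℤ)) * σ⁻¹ := by rw [zpow_sub_one₀ hσ]
      have e2 : σ⁻¹ ^ (-(n : ℤ) - 1) = σ⁻¹ ^ (-(n : ℤ)) * σ := by
        rw [zpow_sub_one₀ hσ', inv_inv]
      have e3 : σ ^ (-(n : ℤ) + 1) = σ ^ (-(n : ℤ)) * σ := by rw [zpow_add_one₀ hσ]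
      have e4 : σ⁻¹ ^ (-(n : ℤ) + 1) = σ⁻¹ ^ (-(n : ℤ)) * σ⁻¹ := by rw [zpow_add_one₀ hσ']
      rw [e1, e2, e3, e4]
      ring

lemma natDegree_T_le : ∀ m : ℕ, (Polynomial.Chebyshev.T ℝ (m : ℤ)).natDegree ≤ m := by
  intro m
  induction m using Nat.strong_induction_on with
  | _ m ih =>
    match m with
    | 0 => simp [Polynomial.Chebyshev.T_zero]
    | 1 => simp [Polynomial.Chebyshev.T_one]
    | (m+2) =>
      have h : ((m : ℤ) + 2) = ((m + 2 : ℕ) : ℤ) := by push_cast; ring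
      rw [← h, Polynomial.Chebyshev.T_add_two]
      refine le_trans (natDegree_sub_le _ _) ?_
      rw [max_le_iff]
      constructor
      · refine le_trans (natDegree_mul_le) ?_
        have h2 : ((m : ℤ) + 1) = ((m + 1 : ℕ) : ℤ) := by push_cast; ring
        have := ih (m+1) (by omega)
        rw [h2]
        calc (2 * X : ℝ[X]).natDegree + (Polynomial.Chebyshev.T ℝ ((m+1 : ℕ) : ℤ)).natDegree
            ≤ 1 + (m + 1) := by
              gcongr
              refine le_trans (natDegree_mul_le) ?_
              simp
          _ ≤ m + 2 := by omega
      · exact le_trans (ih m (by omega)) (by omega)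

lemma trig_bound (r : ℝ) (hr : 0 ≤ r) (n : ℤ) (θ : ℝ) :
    |Real.cos (((n:ℝ)+1) * θ) + 2*r*Real.cos ((n:ℝ)*θ) + r^2*Real.cos (((n:ℝ)-1)*θ)|
      ≤ 1 + 2*r*Real.cos θ + r^2 := by
  set z : ℂ := Complex.exp (θ * Complex.I) with hzdef
  have hz : z ≠ 0 := Complex.exp_ne_zero _
  have key : ∀ m : ℤ, (z ^ m).re = Real.cos ((m:ℝ) * θ) := by
    intro m
    rw [hzdef, ← Complex.exp_int_mul]
    have : ((m : ℂ) * (θ * Complex.I)) = (((m : ℝ) * θ : ℝ) : ℂ) * Complex.I := by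
      push_cast; ring
    rw [this, Complex.exp_ofReal_mul_I_re]
  have habs : ‖z‖ = 1 := Complex.norm_exp_ofReal_mul_I θ
  set w : ℂ := z ^ (n - 1) * (z + (r : ℂ)) ^ 2 with hwdef
  have e2 : z ^ n = z ^ (n-1) * z := by
    have := zpow_add_one₀ hz (n-1)
    rw [sub_add_cancel] at this
    exact this.symm ▸ this
  have e1 : z ^ (n+1) = z ^ (n-1) * z * z := by
    rw [zpow_add_one₀ hz, e2]
  have hw : w = z ^ (n + 1) + ((2*r : ℝ) : ℂ) * z ^ n + ((r^2 : ℝ) : ℂ) * z ^ (n - 1) := by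
    rw [hwdef, e1, e2]; push_cast; ring
  have hre : w.re = Real.cos (((n:ℝ)+1) * θ) + 2*r*Real.cos ((n:ℝ)*θ)
      + r^2*Real.cos (((n:ℝ)-1)*θ) := by
    rw [hw]
    simp only [Complex.add_re, Complex.re_ofReal_mul, key]
    push_cast
    ring
  have habs2 : ‖w‖ = ‖z + (r:ℂ)‖ ^ 2 := by
    rw [hwdef, norm_mul, norm_pow, norm_zpow, habs, _root_.one_zpow, one_mul]
  have hsq : ‖z + (r:ℂ)‖ ^ 2 = 1 + 2*r*Real.cos θ + r^2 := by
    rw [Complex.sq_norm, Complex.normSq_apply]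
    have hzre : z.re = Real.cos θ := by
      rw [hzdef]; exact Complex.exp_ofReal_mul_I_re θ
    have hzim : z.im = Real.sin θ := by
      rw [hzdef]; simp
    simp only [Complex.add_re, Complex.add_im, Complex.ofReal_re, Complex.ofReal_im, hzre, hzim]
    nlinarith [Real.sin_sq_add_cos_sq θ]
  calc |Real.cos (((n:ℝ)+1) * θ) + 2*r*Real.cos ((n:ℝ)*θ) + r^2*Real.cos (((n:ℝ)-1)*θ)|
      = |w.re| := by rw [hre]
    _ ≤ ‖w‖ := Complex.abs_re_le_norm w
    _ = 1 + 2*r*Real.cos θ + r^2 := by rw [habs2, hsq]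

lemma band_pow {N : ℕ} (B : Matrix (Fin N) (Fin N) ℝ) (k : ℕ)
    (hband : ∀ i j : Fin N, (k : ℤ) < |(i : ℤ) - (j : ℤ)| → B i j = 0) :
    ∀ (m : ℕ) (i j : Fin N), ((m * k : ℕ) : ℤ) < |(i : ℤ) - (j : ℤ)| → (B ^ m) i j = 0 := by
  intro m
  induction m with
  | zero =>
    intro i j h
    simp only [pow_zero]
    have hij : i ≠ j := by
      intro he; subst he; simp at h
    exact Matrix.one_apply_ne hij
  | succ m ih =>
    intro i j h
    rw [pow_succ, Matrix.mul_apply]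
    apply Finset.sum_eq_zero
    intro l _
    by_cases hl : ((m * k : ℕ) : ℤ) < |(i : ℤ) - (l : ℤ)|
    · rw [ih i l hl, zero_mul]
    · have h2 : (k : ℤ) < |(l : ℤ) - (j : ℤ)| := by
        have htri : |(i : ℤ) - (j : ℤ)| ≤ |(i : ℤ) - (l : ℤ)| + |(l : ℤ) - (j : ℤ)| :=
          abs_sub_le _ _ _
        rw [not_lt] at hl
        push_cast at h hl ⊢
        have hmk : ((m:ℤ) + 1) * (k:ℤ) = (m:ℤ) * (k:ℤ) + (k:ℤ) := by ring
        linarith [htri]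
      rw [hband l j h2, mul_zero]

lemma dms_conj_pow {N : ℕ} (U V : Matrix (Fin N) (Fin N) ℝ) (hUV : U * V = 1) (hVU : V * U = 1)
    (g : Fin N → ℝ) (m : ℕ) :
    (U * diagonal g * V) ^ m = U * diagonal (fun l => g l ^ m) * V := by
  induction m with
  | zero => simp [Matrix.diagonal_one, hUV]
  | succ m ih =>
    rw [pow_succ, ih]
    have h : U * diagonal (fun l => g l ^ m) * V * (U * diagonal g * V)
        = U * (diagonal (fun l => g l ^ m) * diagonal g) * V := by
      rw [show U * diagonal (fun l => g l ^ m) * V * (U * diagonal g * V)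
          = U * diagonal (fun l => g l ^ m) * (V * U) * diagonal g * V by
            simp only [Matrix.mul_assoc],
        hVU]
      simp only [Matrix.mul_one, Matrix.mul_assoc]
    rw [h, Matrix.diagonal_mul_diagonal]
    have h2 : (fun l => g l ^ m * g l) = fun l => g l ^ (m+1) := by
      funext l; rw [pow_succ]
    rw [h2]

lemma aeval_conj {N : ℕ} (U V : Matrix (Fin N) (Fin N) ℝ) (hUV : U * V = 1) (hVU : V * U = 1)
    (g : Fin N → ℝ) (P : Polynomial ℝ) :
    Polynomial.aeval (U * diagonal g * V) P = U * diagonal (fun l => P.eval (g l)) * V := by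
  induction P using Polynomial.induction_on with
  | C c =>
    simp only [aeval_C, eval_C]
    have h1 : (fun _ : Fin N => c) = c • (fun _ : Fin N => (1:ℝ)) := by funext; simp
    have hdc : (diagonal (fun _ : Fin N => c)) = c • (1 : Matrix (Fin N) (Fin N) ℝ) := by
      rw [h1, Matrix.diagonal_smul, Matrix.diagonal_one]
    rw [hdc, Matrix.mul_smul, Matrix.smul_mul, Matrix.mul_one, hUV]
    simp [Algebra.algebraMap_eq_smul_one]
  | add p q hp hq =>
    rw [map_add, hp, hq]
    have h0 : (fun l => (p + q).eval (g l))
        = (fun l => p.eval (g l) + q.eval (g l)) := by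
      funext l; simp
    rw [h0, ← Matrix.diagonal_add, Matrix.mul_add, Matrix.add_mul]
  | monomial m c _ =>
    rw [_root_.map_mul, map_pow, aeval_C, aeval_X, dms_conj_pow U V hUV hVU g (m+1)]
    have h0 : (fun l => eval (g l) (C c * X ^ (m+1))) = c • (fun l => g l ^ (m+1)) := by
      funext l; simp [smul_eq_mul]
    have hd : (diagonal fun l => eval (g l) (C c * X ^ (m+1)))
        = c • diagonal (fun l => g l ^ (m+1)) := by
      rw [h0, Matrix.diagonal_smul]
    rw [hd, Algebra.algebraMap_eq_smul_one, Matrix.smul_mul, one_mul, Matrix.mul_smul,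
      Matrix.smul_mul]

lemma entry_bound {N : ℕ} (U : Matrix (Fin N) (Fin N) ℝ)
    (hrow : ∀ i, ∑ l, U i l ^ 2 = 1) (g : Fin N → ℝ) (C : ℝ) (hC0 : 0 ≤ C)
    (hC : ∀ l, |g l| ≤ C) (i j : Fin N) :
    |(U * diagonal g * Uᵀ) i j| ≤ C := by
  have hentry : (U * diagonal g * Uᵀ) i j = ∑ l, U i l * g l * U j l := by
    rw [Matrix.mul_apply]
    congr 1
    funext l
    rw [Matrix.mul_diagonal, Matrix.transpose_apply]
  rw [hentry]
  have h1 : |∑ l, U i l * g l * U j l| ≤ ∑ l, |U i l| * |U j l| * C := by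
    refine le_trans (Finset.abs_sum_le_sum_abs _ _) ?_
    apply Finset.sum_le_sum
    intro l _
    rw [abs_mul, abs_mul]
    calc |U i l| * |g l| * |U j l| ≤ |U i l| * C * |U j l| := by
          apply mul_le_mul_of_nonneg_right _ (abs_nonneg _)
          exact mul_le_mul_of_nonneg_left (hC l) (abs_nonneg _)
      _ = |U i l| * |U j l| * C := by ring
  refine le_trans h1 ?_
  rw [← Finset.sum_mul]
  have h2 : ∑ l, |U i l| * |U j l| ≤ 1 := by
    have hcs := Finset.sum_mul_sq_le_sq_mul_sq Finset.univ (fun l => |U i l|) (fun l => |U j l|)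
    simp only [sq_abs] at hcs
    rw [hrow i, hrow j, mul_one] at hcs
    have hnn : 0 ≤ ∑ l, |U i l| * |U j l| :=
      Finset.sum_nonneg fun l _ => mul_nonneg (abs_nonneg _) (abs_nonneg _)
    nlinarith [hcs, hnn]
  calc (∑ l, |U i l| * |U j l|) * C ≤ 1 * C := mul_le_mul_of_nonneg_right h2 hC0
    _ = C := one_mul C

set_option maxHeartbeats 2000000 in
lemma dms_approx (a b : ℝ) (ha : 0 < a) (hab : a < b) (n : ℕ) :
    ∃ P : Polynomial ℝ, P.natDegree ≤ n ∧ ∀ x ∈ Set.Icc a b,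
      |x⁻¹ - P.eval x| ≤ ((Real.sqrt a + Real.sqrt b)^2/(2*a*b)) *
        ((Real.sqrt b - Real.sqrt a)/(Real.sqrt b + Real.sqrt a))^(n+1) := by
  obtain ⟨v, hvdef⟩ : ∃ y, y = Real.sqrt a := ⟨_, rfl⟩
  obtain ⟨w, hwdef⟩ : ∃ y, y = Real.sqrt b := ⟨_, rfl⟩
  rw [← hvdef, ← hwdef]
  have hv : 0 < v := hvdef ▸ Real.sqrt_pos.2 ha
  have hvw : v < w := by rw [hvdef, hwdef]; exact Real.sqrt_lt_sqrt ha.le hab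
  have hw : 0 < w := hv.trans hvw
  have ha2 : v^2 = a := by rw [hvdef]; exact Real.sq_sqrt ha.le
  have hb2 : w^2 = b := by rw [hwdef]; exact Real.sq_sqrt (ha.trans hab).le
  have hba : 0 < b - a := by linarith
  obtain ⟨r, hrdef⟩ : ∃ y:ℝ, y = (w - v)/(w + v) := ⟨_, rfl⟩
  have hwv : (0:ℝ) < w + v := by linarith
  have hr0 : 0 < r := by rw [hrdef]; apply div_pos <;> linarith
  have hr1 : r < 1 := by rw [hrdef, div_lt_one hwv]; linarith
  have hrne : r ≠ 0 := hr0.ne'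
  have h1r : (0:ℝ) < 1 - r^2 := sub_pos.2 (pow_lt_one₀ hr0.le hr1 two_ne_zero)
  obtain ⟨σ, hσdef⟩ : ∃ y:ℝ, y = -r⁻¹ := ⟨_, rfl⟩
  have hσ : σ ≠ 0 := by rw [hσdef]; simp [hrne]
  have hσinv : σ⁻¹ = -r := by rw [hσdef, inv_neg, inv_inv]
  have ht0 : (σ + σ⁻¹)/2 = (a+b)/(a-b) := by
    rw [hσinv, hσdef, hrdef, ← ha2, ← hb2]
    have h2 : w - v ≠ 0 := by linarith
    have h3 : v^2 - w^2 ≠ 0 := (sub_neg.2 (pow_lt_pow_left₀ hvw hv.le two_ne_zero)).ne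
    field_simp
    ring
  obtain ⟨l, hldef⟩ : ∃ y : ℝ[X], y = C (2/(b-a)) * X + C ((a+b)/(a-b)) := ⟨_, rfl⟩
  have hleval : ∀ x : ℝ, l.eval x = (2*x - (a+b))/(b-a) := by
    intro x
    rw [hldef]
    simp only [eval_add, eval_mul, eval_C, eval_X]
    rw [show a - b = -(b-a) by ring, div_neg]
    field_simp
    ring
  have hl0 : l.eval 0 = (σ + σ⁻¹)/2 := by
    rw [hldef, ht0]; simp
  obtain ⟨γ, hγdef⟩ : ∃ y:ℝ, y = (-1:ℝ)^(n+1) * 2 * r^(n+1) / (1-r^2)^2 := ⟨_, rfl⟩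
  obtain ⟨S, hSdef⟩ : ∃ y : ℝ[X], y = C γ * ((Polynomial.Chebyshev.T ℝ ((n:ℤ)+1)).comp l
      + C (2*r) * ((Polynomial.Chebyshev.T ℝ (n:ℤ)).comp l)
      + C (r^2) * ((Polynomial.Chebyshev.T ℝ ((n:ℤ)-1)).comp l)) := ⟨_, rfl⟩
  have hSeval : ∀ x : ℝ, S.eval x = γ * ((Polynomial.Chebyshev.T ℝ ((n:ℤ)+1)).eval (l.eval x)
      + 2*r * ((Polynomial.Chebyshev.T ℝ (n:ℤ)).eval (l.eval x))
      + r^2 * ((Polynomial.Chebyshev.T ℝ ((n:ℤ)-1)).eval (l.eval x))) := by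
    intro x
    rw [hSdef]
    simp only [eval_mul, eval_add, eval_C, eval_comp]
  -- powers of σ
  obtain ⟨A, hAdef⟩ : ∃ y:ℝ, y = (-1:ℝ)^n := ⟨_, rfl⟩
  obtain ⟨R, hRdef⟩ : ∃ y:ℝ, y = r^n := ⟨_, rfl⟩
  have hRpos : 0 < R := by rw [hRdef]; positivity
  have hRne : R ≠ 0 := hRpos.ne'
  have hA : A = 1 ∨ A = -1 := by
    rw [hAdef]
    rcases Nat.even_or_odd n with h | h
    · exact Or.inl h.neg_one_pow
    · exact Or.inr h.neg_one_pow
  have base : σ ^ ((n:ℤ)) = A * R⁻¹ := by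
    rw [hσdef, show -r⁻¹ = (-1) * r⁻¹ by ring, mul_zpow, _root_.inv_zpow, zpow_natCast, zpow_natCast,
      ← hAdef, ← hRdef]
  have base' : σ⁻¹ ^ ((n:ℤ)) = A * R := by
    rw [hσinv, show -r = (-1) * r by ring, mul_zpow, zpow_natCast, zpow_natCast, ← hAdef, ← hRdef]
  have e1 : σ ^ ((n:ℤ)+1) = A * R⁻¹ * σ := by rw [zpow_add_one₀ hσ, base]
  have e2 : σ ^ ((n:ℤ)-1) = A * R⁻¹ * σ⁻¹ := by rw [zpow_sub_one₀ hσ, base]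
  have f1 : σ⁻¹ ^ ((n:ℤ)+1) = A * R * σ⁻¹ := by
    rw [zpow_add_one₀ (inv_ne_zero hσ), base']
  have f2 : σ⁻¹ ^ ((n:ℤ)-1) = A * R * σ := by
    rw [zpow_sub_one₀ (inv_ne_zero hσ), base', inv_inv]
  have hγ' : γ = (A * (-1)) * 2 * (R * r) / (1-r^2)^2 := by
    rw [hγdef, pow_succ, pow_succ, ← hAdef, ← hRdef]
  have h1rne : (1:ℝ) - r^2 ≠ 0 := h1r.ne'
  -- S(0) = 1
  have hS0 : S.eval 0 = 1 := by
    rw [hSeval 0, hl0, cheb_eval_add_inv σ hσ, cheb_eval_add_inv σ hσ, cheb_eval_add_inv σ hσ,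
      e1, e2, f1, f2, base, base', hγ', hσinv, hσdef]
    rcases hA with hA' | hA' <;> subst hA' <;> field_simp <;> ring
  -- degree bounds
  have hdegl : l.natDegree ≤ 1 := by
    rw [hldef]
    refine le_trans (natDegree_add_le _ _) ?_
    refine max_le (le_trans (natDegree_C_mul_le _ _) (by simp)) (by simp)
  have hdegT : ∀ j : ℤ, j.natAbs ≤ n + 1 →
      ((Polynomial.Chebyshev.T ℝ j).comp l).natDegree ≤ n+1 := by
    intro j hj
    refine le_trans natDegree_comp_le ?_
    calc (Polynomial.Chebyshev.T ℝ j).natDegree * l.natDegree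
        ≤ (n+1) * 1 := by
          apply Nat.mul_le_mul _ hdegl
          rw [← Polynomial.Chebyshev.T_natAbs]
          exact le_trans (natDegree_T_le j.natAbs) hj
      _ = n+1 := by ring
  have hdegS : S.natDegree ≤ n + 1 := by
    rw [hSdef]
    refine le_trans (natDegree_C_mul_le _ _) ?_
    refine le_trans (natDegree_add_le _ _) ?_
    refine max_le (le_trans (natDegree_add_le _ _) (max_le ?_ ?_)) ?_
    · exact hdegT _ (by omega)
    · exact le_trans (natDegree_C_mul_le _ _) (hdegT _ (by omega))
    · exact le_trans (natDegree_C_mul_le _ _) (hdegT _ (by omega))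
  -- sup bound for S
  have hbound : ∀ x ∈ Set.Icc a b, |S.eval x| ≤ ((v+w)^2/(2*a*b)) * r^(n+1) * x := by
    intro x hx
    obtain ⟨hax, hxb⟩ := hx
    have hx0 : 0 < x := lt_of_lt_of_le ha hax
    have ht1 : -1 ≤ l.eval x := by
      rw [hleval x, le_div_iff₀ hba]; linarith
    have ht2 : l.eval x ≤ 1 := by rw [hleval x, div_le_one hba]; linarith
    obtain ⟨θ, hθ⟩ : ∃ θ, Real.cos θ = l.eval x :=
      ⟨Real.arccos (l.eval x), Real.cos_arccos ht1 ht2⟩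
    have hcos : ∀ j : ℤ, (Polynomial.Chebyshev.T ℝ j).eval (l.eval x) = Real.cos ((j:ℝ) * θ) := by
      intro j; rw [← hθ, Polynomial.Chebyshev.T_real_cos]
    have hSx : S.eval x = γ * (Real.cos (((n:ℝ)+1)*θ) + 2*r*Real.cos ((n:ℝ)*θ)
        + r^2*Real.cos (((n:ℝ)-1)*θ)) := by
      rw [hSeval x, hcos, hcos, hcos]
      push_cast
      ring
    have hγpos : 0 < 2*r^(n+1)/(1-r^2)^2 :=
      div_pos (mul_pos two_pos (pow_pos hr0 _)) (pow_pos h1r 2)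
    have hγabs : |γ| = 2*r^(n+1)/(1-r^2)^2 := by
      have hg : γ = ((-1:ℝ)^(n+1)) * (2*r^(n+1)/(1-r^2)^2) := by rw [hγdef]; ring
      rw [hg, abs_mul, abs_pow, abs_neg, abs_one, one_pow, one_mul, abs_of_pos hγpos]
    have htrig := trig_bound r hr0.le (n:ℤ) θ
    push_cast at htrig
    have hb1 : |S.eval x| ≤ |γ| * (1 + 2*r*(l.eval x) + r^2) := by
      rw [hSx, abs_mul, ← hθ]
      exact mul_le_mul_of_nonneg_left htrig (abs_nonneg _)
    have hlin : 1 + 2*r*(l.eval x) + r^2 = 4*r/(b-a) * x := by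
      rw [hleval x, hrdef, ← ha2, ← hb2]
      have h2 : w - v ≠ 0 := by linarith
      have h3 : w^2 - v^2 ≠ 0 := (sub_pos.2 (pow_lt_pow_left₀ hvw hv.le two_ne_zero)).ne'
      field_simp
      ring
    have hconst0 : 2/(1-r^2)^2 * (4*r/(b-a)) = (v+w)^2/(2*a*b) := by
      rw [hrdef, ← ha2, ← hb2]
      have h2 : w - v ≠ 0 := by linarith
      have h3 : w^2 - v^2 ≠ 0 := (sub_pos.2 (pow_lt_pow_left₀ hvw hv.le two_ne_zero)).ne'
      have h4 : (1 - ((w - v) / (w + v))^2) = 4*v*w/(w+v)^2 := by field_simp; ring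
      rw [h4]
      field_simp
      ring
    calc |S.eval x| ≤ |γ| * (1 + 2*r*(l.eval x) + r^2) := hb1
      _ = (2*r^(n+1)/(1-r^2)^2) * (4*r/(b-a) * x) := by rw [hγabs, hlin]
      _ = r^(n+1) * (2/(1-r^2)^2 * (4*r/(b-a))) * x := by ring
      _ = ((v+w)^2/(2*a*b)) * r^(n+1) * x := by rw [hconst0]; ring
  -- construct P
  have hQ0 : (Polynomial.C 1 - S).coeff 0 = 0 := by
    rw [coeff_zero_eq_eval_zero]; simp [hS0]
  obtain ⟨P, hPdef⟩ : ∃ y : ℝ[X], y = (Polynomial.C 1 - S).divX := ⟨_, rfl⟩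
  have hQ : P * X = Polynomial.C 1 - S := by
    rw [hPdef]
    conv_rhs => rw [← Polynomial.divX_mul_X_add (Polynomial.C 1 - S)]
    rw [hQ0, map_zero, add_zero]
  have hdegQ : (Polynomial.C 1 - S).natDegree ≤ n+1 :=
    le_trans (natDegree_sub_le _ _) (max_le (by simp) hdegS)
  have hdegP : P.natDegree ≤ n := by
    rw [hPdef]
    have h := Polynomial.natDegree_divX_eq_natDegree_tsub_one (p := Polynomial.C 1 - S)
    omega
  rw [show (w - v)/(w + v) = r from hrdef.symm]
  refine ⟨P, hdegP, ?_⟩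
  intro x hx
  have hx0 : 0 < x := lt_of_lt_of_le ha hx.1
  have heval : P.eval x * x = 1 - S.eval x := by
    have h := congrArg (eval x) hQ
    simpa using h
  have hinv : x⁻¹ - P.eval x = S.eval x / x := by
    field_simp
    linarith [heval]
  rw [hinv, abs_div, abs_of_pos hx0, div_le_iff₀ hx0]
  exact hbound x hx

set_option maxHeartbeats 1000000 in
/-- Demko–Moss–Smith: exponential decay of the entries of the inverse of a
symmetric positive definite banded matrix.  `lmin, lmax` are the extreme
eigenvalues (characterized via Rayleigh quotient bounds), `λ_μ = √lmin`,
`λ_m = √lmax`, `q = ((λ_m+λ_μ)/(λ_m-λ_μ))^{1/k}` and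
`C_B = (1/λ_μ²) max(1, (λ_μ+λ_m)²/(2 λ_m²))`; then
`|(B⁻¹)_{ij}| ≤ C_B q^{-|i-j|}`. -/
theorem stmt_12 (N : ℕ) (B : Matrix (Fin N) (Fin N) ℝ) (hsym : B.IsSymm)
    (k : ℕ) (hk : 0 < k)
    (hband : ∀ i j : Fin N, (k : ℤ) < |(i : ℤ) - (j : ℤ)| → B i j = 0)
    (lmin lmax : ℝ) (hlmin : 0 < lmin) (hlt : lmin < lmax)
    (hray : ∀ x : Fin N → ℝ,
      lmin * (∑ i, x i ^ 2) ≤ B.mulVec x ⬝ᵥ x ∧ B.mulVec x ⬝ᵥ x ≤ lmax * (∑ i, x i ^ 2)) :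
    ∀ i j : Fin N,
      |B⁻¹ i j| ≤
        (1 / Real.sqrt lmin ^ 2) *
          max 1 ((Real.sqrt lmin + Real.sqrt lmax) ^ 2 / (2 * Real.sqrt lmax ^ 2)) *
        (((Real.sqrt lmax + Real.sqrt lmin) / (Real.sqrt lmax - Real.sqrt lmin))
            ^ ((1 : ℝ) / k)) ^ (-(|(i : ℤ) - (j : ℤ)| : ℝ)) := by
  intro i j
  have hlmax : 0 < lmax := hlmin.trans hlt
  -- notation
  have hv : 0 < Real.sqrt lmin := Real.sqrt_pos.2 hlmin
  have hvw : Real.sqrt lmin < Real.sqrt lmax := Real.sqrt_lt_sqrt hlmin.le hlt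
  have hw : 0 < Real.sqrt lmax := hv.trans hvw
  have hv2 : Real.sqrt lmin ^ 2 = lmin := Real.sq_sqrt hlmin.le
  have hw2 : Real.sqrt lmax ^ 2 = lmax := Real.sq_sqrt hlmax.le
  -- Hermitian structure
  have hB : B.IsHermitian := by
    rw [Matrix.IsHermitian, Matrix.conjTranspose_eq_transpose_of_trivial]
    exact hsym
  obtain ⟨U, hUdef⟩ : ∃ y, y = (hB.eigenvectorUnitary : Matrix (Fin N) (Fin N) ℝ) := ⟨_, rfl⟩
  obtain ⟨μ, hμdef⟩ : ∃ y, y = hB.eigenvalues := ⟨_, rfl⟩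
  have hUstar : star U = Uᵀ := by
    rw [hUdef, Matrix.star_eq_conjTranspose, Matrix.conjTranspose_eq_transpose_of_trivial]
  have hU1 : U * Uᵀ = 1 := by
    rw [← hUstar, hUdef]
    exact (Matrix.mem_unitaryGroup_iff).mp (hB.eigenvectorUnitary).2
  have hU2 : Uᵀ * U = 1 := by
    rw [← hUstar, hUdef]
    exact (Matrix.mem_unitaryGroup_iff').mp (hB.eigenvectorUnitary).2
  have hspec : B = U * diagonal μ * Uᵀ := by
    rw [← hUstar, hUdef, hμdef]
    have h := hB.spectral_theorem
    rwa [show (RCLike.ofReal ∘ hB.eigenvalues : Fin N → ℝ) = hB.eigenvalues by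
      funext l; simp [RCLike.ofReal_real_eq_id]] at h
  have hrow : ∀ i0, ∑ l, U i0 l ^ 2 = 1 := by
    intro i0
    have h := congrFun (congrFun hU1 i0) i0
    rw [Matrix.mul_apply] at h
    simp only [Matrix.one_apply_eq] at h
    rw [← h]
    apply Finset.sum_congr rfl
    intro l _
    rw [Matrix.transpose_apply, sq]
  have hcol : ∀ l, ∑ i0, U i0 l ^ 2 = 1 := by
    intro l
    have h := congrFun (congrFun hU2 l) l
    rw [Matrix.mul_apply] at h
    simp only [Matrix.one_apply_eq] at h
    rw [← h]
    apply Finset.sum_congr rfl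
    intro i0 _
    rw [Matrix.transpose_apply, sq]
  -- eigenvalue bounds
  have heig : ∀ l, lmin ≤ μ l ∧ μ l ≤ lmax := by
    intro l
    have hxfun : (fun i0 => U i0 l) = ⇑(hB.eigenvectorBasis l) := by
      funext i0
      rw [hUdef]
      exact hB.eigenvectorUnitary_apply i0 l
    have hx : B *ᵥ ⇑(hB.eigenvectorBasis l) = μ l • ⇑(hB.eigenvectorBasis l) := by
      rw [hμdef]
      exact hB.mulVec_eigenvectorBasis l
    have hx2 : B *ᵥ (fun i0 => U i0 l) = μ l • (fun i0 => U i0 l) := by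
      rw [hxfun]
      exact hx
    obtain ⟨h1, h2⟩ := hray (fun i0 => U i0 l)
    have hdot : (fun i0 => U i0 l) ⬝ᵥ (fun i0 => U i0 l) = ∑ i0, U i0 l ^ 2 := by
      simp [dotProduct, sq]
    have hd : B *ᵥ (fun i0 => U i0 l) ⬝ᵥ (fun i0 => U i0 l) = μ l := by
      rw [hx2, smul_dotProduct, hdot, hcol l, smul_eq_mul, mul_one]
    rw [hd] at h1 h2
    rw [hcol l, mul_one] at h1 h2
    exact ⟨h1, h2⟩
  have hμpos : ∀ l, 0 < μ l := fun l => lt_of_lt_of_le hlmin (heig l).1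
  -- inverse formula
  have hBinv : B⁻¹ = U * diagonal (fun l => (μ l)⁻¹) * Uᵀ := by
    apply Matrix.inv_eq_right_inv
    rw [hspec]
    have assoc1 : U * diagonal μ * Uᵀ * (U * diagonal (fun l => (μ l)⁻¹) * Uᵀ)
        = U * diagonal μ * (Uᵀ * U) * diagonal (fun l => (μ l)⁻¹) * Uᵀ := by
      simp only [Matrix.mul_assoc]
    rw [assoc1, hU2, Matrix.mul_one, Matrix.mul_assoc U (diagonal μ) (diagonal fun l => (μ l)⁻¹),
      Matrix.diagonal_mul_diagonal]
    rw [show (fun l => μ l * (μ l)⁻¹) = fun _ : Fin N => (1:ℝ) by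
      funext l; exact mul_inv_cancel₀ (hμpos l).ne']
    rw [Matrix.diagonal_one, Matrix.mul_one, hU1]
  -- distance
  obtain ⟨d, hddef⟩ : ∃ y, y = ((i:ℤ) - (j:ℤ)).natAbs := ⟨_, rfl⟩
  have habsd : |(i:ℤ) - (j:ℤ)| = (d:ℤ) := by rw [hddef]; exact Int.abs_eq_natAbs _
  -- rewrite the rpow part
  have hQ0 : 0 < (Real.sqrt lmax + Real.sqrt lmin) / (Real.sqrt lmax - Real.sqrt lmin) := by
    apply div_pos <;> linarith
  have hr0 : 0 < (Real.sqrt lmax - Real.sqrt lmin) / (Real.sqrt lmax + Real.sqrt lmin) := by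
    apply div_pos <;> linarith
  have hr1 : (Real.sqrt lmax - Real.sqrt lmin) / (Real.sqrt lmax + Real.sqrt lmin) < 1 := by
    rw [div_lt_one (by linarith)]; linarith
  have hrpow : (((Real.sqrt lmax + Real.sqrt lmin) / (Real.sqrt lmax - Real.sqrt lmin))
      ^ ((1 : ℝ) / k)) ^ (-(|(i : ℤ) - (j : ℤ)| : ℝ))
      = ((Real.sqrt lmax - Real.sqrt lmin) / (Real.sqrt lmax + Real.sqrt lmin))
        ^ ((d:ℝ)/k) := by
    rw [← Real.rpow_mul hQ0.le]
    rw [show ((1:ℝ)/k * (-(|(i : ℤ) - (j : ℤ)| : ℝ))) = -(((|(i : ℤ) - (j : ℤ)| : ℤ):ℝ)/k) by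
      push_cast; ring]
    rw [habsd]
    rw [Real.rpow_neg hQ0.le]
    rw [show ((Real.sqrt lmax - Real.sqrt lmin) / (Real.sqrt lmax + Real.sqrt lmin))
        = ((Real.sqrt lmax + Real.sqrt lmin) / (Real.sqrt lmax - Real.sqrt lmin))⁻¹ by
      rw [inv_div]]
    rw [Real.inv_rpow hQ0.le]
    norm_num
  rw [hrpow]
  -- the two cases
  rcases Nat.eq_zero_or_pos d with hd0 | hdpos
  · -- diagonal-ish case: use plain norm bound
    subst hd0
    have hb1 : |B⁻¹ i j| ≤ lmin⁻¹ := by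
      rw [hBinv]
      apply entry_bound U hrow _ _ (by positivity)
      intro l
      rw [abs_of_pos (inv_pos.2 (hμpos l))]
      exact inv_anti₀ hlmin (heig l).1
    have hrz : ((Real.sqrt lmax - Real.sqrt lmin) / (Real.sqrt lmax + Real.sqrt lmin))
        ^ (((0:ℕ):ℝ)/k) = 1 := by
      norm_num
    rw [hrz, mul_one]
    calc |B⁻¹ i j| ≤ lmin⁻¹ := hb1
      _ = (1 / Real.sqrt lmin ^ 2) * 1 := by rw [hv2]; ring
      _ ≤ (1 / Real.sqrt lmin ^ 2) *
          max 1 ((Real.sqrt lmin + Real.sqrt lmax) ^ 2 / (2 * Real.sqrt lmax ^ 2)) := by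
        apply mul_le_mul_of_nonneg_left (le_max_left _ _) (by positivity)
  · -- off-diagonal case
    obtain ⟨n, hndef⟩ : ∃ y, y = (d-1)/k := ⟨_, rfl⟩
    obtain ⟨P, hdegP, hP⟩ := dms_approx lmin lmax hlmin hlt n
    have hnk1 : n * k ≤ d - 1 := by rw [hndef]; exact Nat.div_mul_le_self _ _
    have hnk2 : d ≤ (n+1) * k := by
      obtain ⟨t, ht⟩ : ∃ t, t = k * ((d-1)/k) := ⟨_, rfl⟩
      have hmod : t + (d-1) % k = d - 1 := by rw [ht]; exact Nat.div_add_mod _ _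
      have hml : (d-1) % k < k := Nat.mod_lt _ hk
      have hts : (n+1)*k = t + k := by rw [hndef, ht]; ring
      omega
    have haev : Polynomial.aeval B P = U * diagonal (fun l => P.eval (μ l)) * Uᵀ := by
      rw [hspec]
      exact aeval_conj U Uᵀ hU1 hU2 μ P
    have hsplit : B⁻¹ = U * diagonal (fun l => (μ l)⁻¹ - P.eval (μ l)) * Uᵀ
        + Polynomial.aeval B P := by
      rw [haev, ← Matrix.add_mul, ← Matrix.mul_add, Matrix.diagonal_add]
      rw [show (fun l => ((μ l)⁻¹ - P.eval (μ l)) + P.eval (μ l)) = fun l => (μ l)⁻¹ by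
        funext l; ring]
      exact hBinv
    have haevij : (Polynomial.aeval B P) i j = 0 := by
      rw [Polynomial.aeval_eq_sum_range, Matrix.sum_apply]
      apply Finset.sum_eq_zero
      intro m hm
      rw [Matrix.smul_apply]
      have hm' : m ≤ n := by
        have := Finset.mem_range.1 hm
        omega
      have hmk : m * k < d := by
        have h1 : m * k ≤ n * k := Nat.mul_le_mul_right k hm'
        omega
      rw [band_pow B k hband m i j (by rw [habsd]; exact_mod_cast hmk), smul_zero]
    have hC0pos : (0:ℝ) ≤ ((Real.sqrt lmin + Real.sqrt lmax)^2/(2*lmin*lmax)) *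
        ((Real.sqrt lmax - Real.sqrt lmin)/(Real.sqrt lmax + Real.sqrt lmin))^(n+1) := by
      apply mul_nonneg (by positivity) (le_of_lt (pow_pos hr0 _))
    have hmain : |B⁻¹ i j| ≤ ((Real.sqrt lmin + Real.sqrt lmax)^2/(2*lmin*lmax)) *
        ((Real.sqrt lmax - Real.sqrt lmin)/(Real.sqrt lmax + Real.sqrt lmin))^(n+1) := by
      rw [hsplit, Matrix.add_apply, haevij, add_zero]
      apply entry_bound U hrow _ _ hC0pos
      intro l
      exact hP (μ l) ⟨(heig l).1, (heig l).2⟩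
    refine le_trans hmain ?_
    -- compare constants and powers
    have hcc : ((Real.sqrt lmin + Real.sqrt lmax)^2/(2*lmin*lmax))
        ≤ (1 / Real.sqrt lmin ^ 2) *
          max 1 ((Real.sqrt lmin + Real.sqrt lmax) ^ 2 / (2 * Real.sqrt lmax ^ 2)) := by
      have heq : ((Real.sqrt lmin + Real.sqrt lmax)^2/(2*lmin*lmax))
          = (1 / Real.sqrt lmin ^ 2) *
            ((Real.sqrt lmin + Real.sqrt lmax) ^ 2 / (2 * Real.sqrt lmax ^ 2)) := by
        rw [hv2, hw2]
        field_simp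
      rw [heq]
      apply mul_le_mul_of_nonneg_left (le_max_right _ _) (by positivity)
    have hpp : ((Real.sqrt lmax - Real.sqrt lmin)/(Real.sqrt lmax + Real.sqrt lmin))^(n+1)
        ≤ ((Real.sqrt lmax - Real.sqrt lmin)/(Real.sqrt lmax + Real.sqrt lmin))^((d:ℝ)/k) := by
      rw [show ((Real.sqrt lmax - Real.sqrt lmin)/(Real.sqrt lmax + Real.sqrt lmin))^(n+1)
          = ((Real.sqrt lmax - Real.sqrt lmin)/(Real.sqrt lmax + Real.sqrt lmin))
            ^ (((n+1:ℕ)):ℝ) by rw [Real.rpow_natCast]]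
      apply Real.rpow_le_rpow_of_exponent_ge hr0 hr1.le
      rw [div_le_iff₀ (by exact_mod_cast hk : (0:ℝ) < (k:ℝ))]
      push_cast
      exact_mod_cast Nat.cast_le.2 hnk2
    calc ((Real.sqrt lmin + Real.sqrt lmax)^2/(2*lmin*lmax)) *
        ((Real.sqrt lmax - Real.sqrt lmin)/(Real.sqrt lmax + Real.sqrt lmin))^(n+1)
        ≤ ((1 / Real.sqrt lmin ^ 2) *
          max 1 ((Real.sqrt lmin + Real.sqrt lmax) ^ 2 / (2 * Real.sqrt lmax ^ 2))) *
          ((Real.sqrt lmax - Real.sqrt lmin)/(Real.sqrt lmax + Real.sqrt lmin))^((d:ℝ)/k) := by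
          apply mul_le_mul hcc hpp (le_of_lt (pow_pos hr0 _)) (by positivity)
      _ = _ := rfl
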